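/- For any prime ℓ and positive integer s, the formal power series F(q)^{ℓ^{s−1}} ≡ 1 (mod ℓ^s), where F(q) = ∏_{n≥1} (1 − q^n)^{ℓ^2} / (1 − q^{ℓ^2 n}). -/

import Mathlib

/-!
Modulo `ℓ` the Frobenius gives `(1 - qⁿ)^{ℓ²} ≡ 1 - q^{ℓ²n}`, so the numerator and the
denominator of `F` agree modulo `ℓ`. Raising a congruence `a ≡ b (mod ℓ)` to the power `ℓ^{s-1}`
upgrades it to `a^{ℓ^{s-1}} ≡ b^{ℓ^{s-1}} (mod ℓ^s)`.
-/

open PowerSeries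

theorem Finset.dvd_prod_sub_prod {ι R : Type*} [CommRing R] {s : Finset ι} {f g : ι → R} {c : R}
    (h : ∀ i ∈ s, c ∣ f i - g i) : c ∣ ∏ i ∈ s, f i - ∏ i ∈ s, g i := by
  simp only [← Ideal.mem_span_singleton, ← Ideal.Quotient.eq, map_prod] at h ⊢
  exact Finset.prod_congr rfl h

theorem natCast_dvd_one_sub_pow_prime_pow_sub {R : Type*} [CommRing R] {p : ℕ} (hp : p.Prime)
    (x : R) (n : ℕ) : (p : R) ∣ (1 - x) ^ p ^ n - (1 - x ^ p ^ n) := by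
  obtain ⟨r, hr⟩ := exists_add_pow_prime_pow_eq hp (1 - x) x n
  rw [sub_add_cancel, one_pow] at hr
  exact ⟨-((1 - x) * x * r), by linear_combination -hr⟩

theorem PowerSeries.dvd_coeff_of_C_dvd {R : Type*} [CommSemiring R] {r : R} {f : R⟦X⟧}
    (h : C r ∣ f) (n : ℕ) : r ∣ coeff n f := by
  obtain ⟨g, rfl⟩ := h
  rw [coeff_C_mul]
  exact dvd_mul_right r _

open PowerSeries in
/-- `F^{ℓ^{s-1}} ≡ 1 (mod ℓ^s)` for `F = ∏ (1-qⁿ)^{ℓ²}/(1-q^{ℓ²n})`, stated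
equivalently as `∏ (1-qⁿ)^{ℓ²·ℓ^{s-1}} ≡ ∏ (1-q^{ℓ²n})^{ℓ^{s-1}} (mod ℓ^s)`,
coefficientwise with products truncated at `N`. -/
theorem stmt15 (ℓ : ℕ) (hℓ : ℓ.Prime) (s : ℕ) (hs : 1 ≤ s) (N : ℕ) :
    ((ℓ : ℤ) ^ s) ∣ (PowerSeries.coeff N)
      ((∏ m ∈ Finset.Icc 1 N,
          (1 - (PowerSeries.X : PowerSeries ℤ) ^ m) ^ (ℓ ^ 2 * ℓ ^ (s - 1))) -
        ∏ m ∈ Finset.Icc 1 N,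
          (1 - (PowerSeries.X : PowerSeries ℤ) ^ (ℓ ^ 2 * m)) ^ (ℓ ^ (s - 1))) := by
  have hfactor (m : ℕ) :
      (ℓ : ℤ⟦X⟧) ∣ (1 - X ^ m) ^ ℓ ^ 2 - (1 - X ^ (ℓ ^ 2 * m)) := by
    rw [pow_mul']
    exact natCast_dvd_one_sub_pow_prime_pow_sub hℓ _ 2
  have hprod := dvd_sub_pow_of_dvd_sub
    (Finset.dvd_prod_sub_prod (s := Finset.Icc 1 N) fun m _ => hfactor m) (s - 1)
  rw [Nat.sub_add_cancel hs, ← Finset.prod_pow, ← Finset.prod_pow] at hprod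
  simp only [← pow_mul] at hprod
  refine dvd_coeff_of_C_dvd ?_ N
  rwa [map_pow, map_natCast]
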